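/- Let Γ be a simple graph on a vertex set V and let S ⊆ V be a set of vertices such that every vertex of S is adjacent to every vertex of the complement Sᶜ (Γ is the join of Γ[S] and Γ[Sᶜ]). Then A_Γ decomposes as a direct product: there is a group isomorphism A_Γ ≃* A_{Γ[S]} × A_{Γ[Sᶜ]} sending of v to (the corresponding generator of A_{Γ[S]}, 1) for v ∈ S and to (1, the corresponding generator of A_{Γ[Sᶜ]}) for v ∈ Sᶜ. -/

import Mathlib

/-- The set of commutator relators of a right-angled Artin group. -/
def raagRels {V : Type*} (Γ : SimpleGraph V) : Set (FreeGroup V) :=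
  {r | ∃ u v : V, Γ.Adj u v ∧
    r = FreeGroup.of u * FreeGroup.of v * (FreeGroup.of u)⁻¹ * (FreeGroup.of v)⁻¹}

/-- The right-angled Artin group of the graph `Γ`. -/
abbrev RAAG {V : Type*} (Γ : SimpleGraph V) : Type _ :=
  PresentedGroup (raagRels Γ)

/-- The canonical generator of `RAAG Γ` corresponding to a vertex. -/
def RAAG.of {V : Type*} (Γ : SimpleGraph V) (v : V) : RAAG Γ :=
  PresentedGroup.of v

/-
A vertex of `S` commutes in `A_Γ` with every vertex of `Sᶜ`, so the inclusions of `A_{Γ[S]}` and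
`A_{Γ[Sᶜ]}` have commuting images and together give a homomorphism `A_{Γ[S]} × A_{Γ[Sᶜ]} → A_Γ`.
Its inverse is the product of the two retractions `A_Γ → A_{Γ[S]}` and `A_Γ → A_{Γ[Sᶜ]}` killing
the generators outside `S`, resp. outside `Sᶜ`; both composites fix all generators.
-/

theorem MonoidHom.prod_ext {M N P : Type*} [MulOneClass M] [MulOneClass N] [MulOneClass P]
    {f g : M × N →* P} (hl : f.comp (inl M N) = g.comp (inl M N))
    (hr : f.comp (inr M N) = g.comp (inr M N)) : f = g := by
  ext ⟨m, n⟩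
  rw [← Prod.fst_mul_snd (m, n), map_mul, map_mul]
  exact congr_arg₂ (· * ·) (DFunLike.congr_fun hl m) (DFunLike.congr_fun hr n)

theorem PresentedGroup.commute_apply_of_forall_commute_of {α β G : Type*} [Group G]
    {rels₁ : Set (FreeGroup α)} {rels₂ : Set (FreeGroup β)}
    (f : PresentedGroup rels₁ →* G) (g : PresentedGroup rels₂ →* G)
    (h : ∀ x y, Commute (f (.of x)) (g (.of y))) (a : PresentedGroup rels₁)
    (b : PresentedGroup rels₂) : Commute (f a) (g b) := by
  have h_of_left : ∀ x, Commute (g b) (f (.of x)) := fun x =>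
    Subgroup.mem_centralizer_singleton_iff.mp <|
      generated_by _ ((Subgroup.centralizer {f (.of x)}).comap g)
        (fun y => Subgroup.mem_centralizer_singleton_iff.mpr (h x y).symm.eq) b
  exact Subgroup.mem_centralizer_singleton_iff.mp <|
    generated_by _ ((Subgroup.centralizer {g b}).comap f)
      (fun x => Subgroup.mem_centralizer_singleton_iff.mpr (h_of_left x).symm.eq) a

namespace RAAG

variable {V W G : Type*} [Group G] {Γ : SimpleGraph V} {Δ : SimpleGraph W}

theorem commute_of_adj {u v : V} (h : Γ.Adj u v) : Commute (of Γ u) (of Γ v) := by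
  have hrel := PresentedGroup.one_of_mem (rels := raagRels Γ) ⟨u, v, h, rfl⟩
  simp only [map_mul, map_inv] at hrel
  exact commutatorElement_eq_one_iff_commute.mp hrel

@[ext]
theorem hom_ext {f g : RAAG Γ →* G} (h : ∀ v, f (of Γ v) = g (of Γ v)) : f = g :=
  PresentedGroup.ext h

def lift (f : V → G) (hf : ∀ u v, Γ.Adj u v → Commute (f u) (f v)) : RAAG Γ →* G :=
  PresentedGroup.toGroup (f := f) <| by
    rintro r ⟨u, v, huv, rfl⟩
    simpa only [map_mul, map_inv, FreeGroup.lift_apply_of, commutatorElement_def] using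
      commutatorElement_eq_one_iff_commute.mpr (hf u v huv)

@[simp]
theorem lift_of (f : V → G) (hf : ∀ u v, Γ.Adj u v → Commute (f u) (f v)) (v : V) :
    lift f hf (of Γ v) = f v :=
  PresentedGroup.toGroup.of _

def map (φ : Γ →g Δ) : RAAG Γ →* RAAG Δ :=
  lift (fun v => of Δ (φ v)) fun _ _ huv => commute_of_adj (φ.map_adj huv)

@[simp]
theorem map_of (φ : Γ →g Δ) (v : V) : map φ (of Γ v) = of Δ (φ v) :=
  lift_of _ _ v

theorem commute_map_induce_compl (S : Set V) (hS : ∀ s ∈ S, ∀ t ∉ S, Γ.Adj s t)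
    (a : RAAG (Γ.induce S)) (b : RAAG (Γ.induce Sᶜ)) :
    Commute (map (SimpleGraph.Embedding.induce S).toHom a)
      (map (SimpleGraph.Embedding.induce Sᶜ).toHom b) :=
  PresentedGroup.commute_apply_of_forall_commute_of _ _
    (fun s t => by
      change Commute (map _ (of _ s)) (map _ (of _ t))
      simpa using commute_of_adj (hS s s.2 t t.2)) a b

def restrict (S : Set V) [DecidablePred (· ∈ S)] : RAAG Γ →* RAAG (Γ.induce S) :=
  lift (fun v => if h : v ∈ S then of _ ⟨v, h⟩ else 1) fun u v huv => by
    by_cases hu : u ∈ S <;> by_cases hv : v ∈ S <;> simp only [hu, hv, dite_true, dite_false]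
    · exact commute_of_adj (show (Γ.induce S).Adj ⟨u, hu⟩ ⟨v, hv⟩ from huv)
    all_goals simp

variable (S : Set V) [DecidablePred (· ∈ S)]

theorem restrict_of_mem {v : V} (h : v ∈ S) :
    restrict (Γ := Γ) S (of Γ v) = of _ ⟨v, h⟩ := by
  simp [restrict, h]

theorem restrict_of_notMem {v : V} (h : v ∉ S) : restrict (Γ := Γ) S (of Γ v) = 1 := by
  simp [restrict, h]

end RAAG

/-- If every vertex of `S` is adjacent to every vertex of `Sᶜ` (so `Γ` is the
join of `Γ[S]` and `Γ[Sᶜ]`), then the right-angled Artin group decomposes as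
the direct product `A_{Γ[S]} × A_{Γ[Sᶜ]}`. -/
theorem raag_direct_product_decomposition {V : Type*} (Γ : SimpleGraph V)
    (S : Set V) (hS : ∀ s ∈ S, ∀ t ∉ S, Γ.Adj s t) :
    ∃ φ : RAAG Γ ≃* RAAG (Γ.induce S) × RAAG (Γ.induce Sᶜ),
      (∀ v : V, ∀ h : v ∈ S,
        φ (RAAG.of Γ v) = (RAAG.of (Γ.induce S) ⟨v, h⟩, 1)) ∧
      (∀ v : V, ∀ h : v ∉ S,
        φ (RAAG.of Γ v) = (1, RAAG.of (Γ.induce Sᶜ) ⟨v, h⟩)) := by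
  classical
  let φ := (RAAG.restrict (Γ := Γ) S).prod (RAAG.restrict Sᶜ)
  let ψ := (RAAG.map (SimpleGraph.Embedding.induce S).toHom).noncommCoprod
    (RAAG.map (SimpleGraph.Embedding.induce Sᶜ).toHom) (RAAG.commute_map_induce_compl S hS)
  have hφ_mem : ∀ v (h : v ∈ S), φ (RAAG.of Γ v) = (RAAG.of _ ⟨v, h⟩, 1) := fun v h => by
    simp [φ, RAAG.restrict_of_mem S h, RAAG.restrict_of_notMem Sᶜ (Set.notMem_compl_iff.mpr h)]
  have hφ_notMem : ∀ v (h : v ∉ S), φ (RAAG.of Γ v) = (1, RAAG.of _ ⟨v, h⟩) := fun v h => by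
    simp [φ, RAAG.restrict_of_notMem S h, RAAG.restrict_of_mem Sᶜ (Set.mem_compl h)]
  have hψφ : ψ.comp φ = .id _ := RAAG.hom_ext fun v => by
    by_cases h : v ∈ S
    · simp [ψ, hφ_mem v h]
    · simp [ψ, hφ_notMem v h]
  have hφψ : φ.comp ψ = .id _ :=
    MonoidHom.prod_ext (RAAG.hom_ext fun v => by simp [ψ, hφ_mem v v.2])
      (RAAG.hom_ext fun v => by simp [ψ, hφ_notMem v v.2])
  exact ⟨φ.toMulEquiv ψ hψφ hφψ, hφ_mem, hφ_notMem⟩
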